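/- Let N be a positive integer, β ∈ ℂ with β ≠ 0, and x̂, ŷ ∈ ℂ^N. Define w ∈ ℂ^N by w_n = β^{−1}·ŷ_n/x̂_n if x̂_n ≠ 0 and w_n = 0 if x̂_n = 0. Then for every v ∈ ℂ^N, ‖β·(w ⊙ x̂) − ŷ‖ ≤ ‖β·(v ⊙ x̂) − ŷ‖, where ⊙ denotes entrywise product and ‖·‖ the Euclidean norm; moreover the minimum value satisfies ‖β·(w ⊙ x̂) − ŷ‖² = Σ_{n : x̂_n = 0} |ŷ_n|². -/

import Mathlib

open Finset

/-
The residual decouples over the entries: entry n contributes ‖β v_n x̂_n − ŷ_n‖², which is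
always at least ‖ŷ_n‖² when x̂_n = 0 and at least 0 otherwise. The quotient configuration
attains this bound entrywise, since β (β⁻¹ ŷ_n / x̂_n) x̂_n = ŷ_n whenever x̂_n ≠ 0.
-/

section Residual

variable {𝕜 : Type*} [DecidableEq 𝕜]

lemma sq_norm_residual_of_quotient [NormedDivisionRing 𝕜] {β x y w : 𝕜} (hβ : β ≠ 0)
    (hw : w = if x ≠ 0 then β⁻¹ * y / x else 0) :
    ‖β * (w * x) - y‖ ^ 2 = if x = 0 then ‖y‖ ^ 2 else 0 := by
  by_cases hx : x = 0
  · simp [hw, hx]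
  · rw [hw, if_pos hx, div_mul_cancel₀ _ hx, mul_inv_cancel_left₀ hβ]
    simp [hx]

lemma ite_sq_norm_le_sq_norm_residual [SeminormedRing 𝕜] (β v x y : 𝕜) :
    (if x = 0 then ‖y‖ ^ 2 else 0) ≤ ‖β * (v * x) - y‖ ^ 2 := by
  split_ifs with hx
  · simp [hx]
  · positivity

end Residual

theorem beam_reshaping_optimal_configuration_general
    (N : ℕ) (β : ℂ) (hβ : β ≠ 0)
    (xhat yhat : Fin N → ℂ)
    (w : Fin N → ℂ)
    (hw : ∀ n, w n = if xhat n ≠ 0 then β⁻¹ * yhat n / xhat n else 0) :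
    (∀ v : Fin N → ℂ,
        Real.sqrt (∑ n : Fin N, ‖β * (w n * xhat n) - yhat n‖ ^ 2)
          ≤ Real.sqrt (∑ n : Fin N, ‖β * (v n * xhat n) - yhat n‖ ^ 2))
    ∧ (∑ n : Fin N, ‖β * (w n * xhat n) - yhat n‖ ^ 2)
        = ∑ n : Fin N, (if xhat n = 0 then ‖yhat n‖ ^ 2 else 0) := by
  have hmin : (∑ n : Fin N, ‖β * (w n * xhat n) - yhat n‖ ^ 2)
      = ∑ n : Fin N, (if xhat n = 0 then ‖yhat n‖ ^ 2 else 0) :=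
    sum_congr rfl fun n _ => sq_norm_residual_of_quotient hβ (hw n)
  refine ⟨fun v => Real.sqrt_le_sqrt ?_, hmin⟩
  rw [hmin]
  exact sum_le_sum fun n _ => ite_sq_norm_le_sq_norm_residual β (v n) (xhat n) (yhat n)

theorem beam_reshaping_optimal_configuration
    (N : ℕ) (hN : 0 < N) (β : ℂ) (hβ : β ≠ 0)
    (xhat yhat : Fin N → ℂ)
    (w : Fin N → ℂ)
    (hw : ∀ n, w n = if xhat n ≠ 0 then β⁻¹ * yhat n / xhat n else 0) :
    (∀ v : Fin N → ℂ,
        Real.sqrt (∑ n : Fin N, ‖β * (w n * xhat n) - yhat n‖ ^ 2)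
          ≤ Real.sqrt (∑ n : Fin N, ‖β * (v n * xhat n) - yhat n‖ ^ 2))
    ∧ (∑ n : Fin N, ‖β * (w n * xhat n) - yhat n‖ ^ 2)
        = ∑ n : Fin N, (if xhat n = 0 then ‖yhat n‖ ^ 2 else 0) :=
  beam_reshaping_optimal_configuration_general N β hβ xhat yhat w hw
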